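/- For every integer K ≥ 2, every δ ∈ (0,1], and every sample size n > (4/3)·log(1/δ), the minimax rate satisfies r_n*(δ) ≥ (2·log(K−1)·log(1/δ))/(3n). -/

import Mathlib

/-!
Fix an estimator and let `q` be its output on the constant sample `(i, …, i)`. Some `j ≠ i`
has `(K - 1) q j ≤ 1 - q i`, so the distribution `p` with mass `1 - l` on `i` and
`l = 2 log(1/δ) / (3n)` on `j` satisfies `KL(p‖q) ≥ l log(K - 1)` (two applications of
`log x ≥ 1 - 1/x`). Yet `p` produces the constant sample with probability
`(1 - l)^n > e^{-log(1/δ)} = δ`, by convexity of `exp` on `[-3/4, 0]` since `l < 1/2`.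
-/

open scoped ENNReal
open MeasureTheory

/-- The probability simplex on `Fin K`. -/
def simplex (K : ℕ) : Set (Fin K → ℝ) :=
  {p | (∀ i, 0 ≤ p i) ∧ ∑ i, p i = 1}

/-- Kullback–Leibler divergence between two vectors on `Fin K`, with the
conventions `0 · log 0 = 0` and value `∞` if `p i > 0 = q i` for some `i`. -/
noncomputable def klD {K : ℕ} (p q : Fin K → ℝ) : ℝ≥0∞ :=
  if ∀ i, 0 < p i → 0 < q i then ENNReal.ofReal (∑ i, p i * Real.log (p i / q i)) else ⊤

/-- The law of `n` i.i.d. samples from the distribution `p` on `Fin K`. -/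
noncomputable def iidMeasure (n K : ℕ) (p : Fin K → ℝ) : Measure (Fin n → Fin K) :=
  ∑ x : Fin n → Fin K, (∏ t, ENNReal.ofReal (p (x t))) • Measure.dirac x

/-- `countTo x t i` is the number of indices `s` among the first `t` samples with `x s = i`. -/
def countTo {n K : ℕ} (x : Fin n → Fin K) (t : ℕ) (i : Fin K) : ℕ :=
  (Finset.univ.filter (fun s : Fin n => (s : ℕ) < t ∧ x s = i)).card

/-- The worst-case rate of an estimator at confidence level `1 - δ`:
the least `r` such that `sup_{p ∈ Δ^K} P(KL(p‖p̂) > r) ≤ δ` (with value `∞` if no such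
`r` exists). -/
noncomputable def worstRate (n K : ℕ) (phat : (Fin n → Fin K) → (Fin K → ℝ)) (δ : ℝ) : ℝ≥0∞ :=
  ⨅ (r : ℝ≥0∞) (_ : (⨆ p : {p : Fin K → ℝ // p ∈ simplex K},
      iidMeasure n K p.val {x | r < klD p.val (phat x)}) ≤ ENNReal.ofReal δ), r

/-- The minimax rate: the infimum of worst-case rates over all estimators. -/
noncomputable def minimaxRate (n K : ℕ) (δ : ℝ) : ℝ≥0∞ :=
  ⨅ phat : {f : (Fin n → Fin K) → (Fin K → ℝ) // ∀ x, f x ∈ simplex K},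
    worstRate n K phat.val δ

open Real

lemma exp_neg_lt_one_sub_two_thirds_mul {m : ℝ} (h0 : 0 < m) (h1 : m < 3 / 4) :
    exp (-m) < 1 - 2 * m / 3 := by
  have hhalf : exp (-(3 / 4)) < 1 / 2 := by
    rw [exp_neg, inv_lt_comm₀ (exp_pos _) (by norm_num), one_div, inv_inv,
      ← log_lt_iff_lt_exp (by norm_num)]
    linarith [log_two_lt_d9]
  -- `-m` is the convex combination of `0` and `-3/4` with weight `4m/3` on `-3/4`
  have hchord := strictConvexOn_exp.2 (Set.mem_univ 0) (Set.mem_univ (-(3 / 4)))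
    (by norm_num) (by linarith : 0 < 1 - 4 * m / 3) (by positivity : 0 < 4 * m / 3) (by ring)
  simp only [smul_eq_mul, mul_zero, zero_add, exp_zero, mul_one] at hchord
  rw [show 4 * m / 3 * -(3 / 4) = -m by ring] at hchord
  nlinarith

lemma exp_neg_lt_one_sub_pow {L : ℝ} {n : ℕ} (hL : 0 < L) (hn : 4 / 3 * L < n) :
    exp (-L) < (1 - 2 * L / (3 * n)) ^ n := by
  have hn0 : (0 : ℝ) < n := by linarith
  have hpow : exp (-L) = exp (-(L / n)) ^ n := by
    rw [← exp_nat_mul]; congr 1; field_simp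
  rw [hpow, show 2 * L / (3 * n) = 2 * (L / n) / 3 by ring]
  refine pow_lt_pow_left₀ (exp_neg_lt_one_sub_two_thirds_mul (by positivity) ?_)
    (exp_pos _).le (by exact_mod_cast hn0.ne')
  rw [div_lt_iff₀ hn0]; linarith

lemma sub_le_mul_log_div {a b : ℝ} (ha : 0 < a) (hb : 0 < b) : a - b ≤ a * log (a / b) := by
  have h := mul_le_mul_of_nonneg_left (one_sub_inv_le_log_of_pos (div_pos ha hb)) ha.le
  rwa [inv_div, mul_sub, mul_one, mul_div_cancel₀ _ ha.ne'] at h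

lemma mul_log_le_two_point_kl {l u v c : ℝ} (hl0 : 0 < l) (hl1 : l < 1) (hu : 0 < u)
    (hv : 0 < v) (hc : 1 ≤ c) (hcv : c * v ≤ 1 - u) :
    l * log c ≤ (1 - l) * log ((1 - l) / u) + l * log (l / v) := by
  have hc0 : 0 < c := by linarith
  have hsplit : l * log (l / v) = l * log c + l * log (l / (c * v)) := by
    rw [log_div hl0.ne' (mul_pos hc0 hv).ne', log_mul hc0.ne' hv.ne', log_div hl0.ne' hv.ne']
    ring
  have h1 := sub_le_mul_log_div (by linarith : 0 < 1 - l) hu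
  have h2 := sub_le_mul_log_div hl0 (by positivity : 0 < c * v)
  linarith

section TwoPoint

variable {K : ℕ}

def twoPoint (i j : Fin K) (l : ℝ) : Fin K → ℝ :=
  fun k => if k = i then 1 - l else if k = j then l else 0

variable {i j : Fin K} {l : ℝ}

lemma sum_twoPoint (hij : i ≠ j) {f : Fin K → ℝ → ℝ} (hf : ∀ k, f k 0 = 0) :
    ∑ k, f k (twoPoint i j l k) = f i (1 - l) + f j l := by
  rw [← Finset.sum_subset (Finset.subset_univ {i, j}) fun k _ hk => ?_, Finset.sum_pair hij]
  · simp [twoPoint, hij.symm]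
  · simp only [Finset.mem_insert, Finset.mem_singleton, not_or] at hk
    simp [twoPoint, hk.1, hk.2, hf]

lemma twoPoint_mem_simplex (hij : i ≠ j) (hl0 : 0 ≤ l) (hl1 : l ≤ 1) :
    twoPoint i j l ∈ simplex K := by
  refine ⟨fun k => ?_, ?_⟩
  · unfold twoPoint; split_ifs <;> linarith
  · rw [sum_twoPoint (f := fun _ x => x) hij fun _ => rfl]
    ring

lemma klD_twoPoint (hij : i ≠ j) {q : Fin K → ℝ} (hqi : 0 < q i) (hqj : 0 < q j) :
    klD (twoPoint i j l) q =
      ENNReal.ofReal ((1 - l) * log ((1 - l) / q i) + l * log (l / q j)) := by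
  have hpos : ∀ k, 0 < twoPoint i j l k → 0 < q k := fun k hk => by
    unfold twoPoint at hk
    split_ifs at hk with hki hkj
    · exact hki ▸ hqi
    · exact hkj ▸ hqj
    · exact absurd hk (lt_irrefl 0)
  rw [klD, if_pos hpos, sum_twoPoint (f := fun k x => x * log (x / q k)) hij fun _ => zero_mul _]

lemma ofReal_mul_log_le_klD_twoPoint (hij : i ≠ j) (hl0 : 0 < l) (hl1 : l < 1)
    {q : Fin K → ℝ} {c : ℝ} (hc : 1 ≤ c) (hq : c * q j ≤ 1 - q i) :
    ENNReal.ofReal (l * log c) ≤ klD (twoPoint i j l) q := by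
  by_cases hqi : 0 < q i
  · by_cases hqj : 0 < q j
    · rw [klD_twoPoint hij hqi hqj]
      exact ENNReal.ofReal_le_ofReal (mul_log_le_two_point_kl hl0 hl1 hqi hqj hc hq)
    · rw [klD, if_neg fun h => hqj (h j (by simp [twoPoint, hij.symm, hl0]))]
      exact le_top
  · rw [klD, if_neg fun h => hqi (h i (by simp [twoPoint]; linarith))]
    exact le_top

end TwoPoint

lemma exists_ne_mul_le_one_sub {K : ℕ} (hK : 2 ≤ K) {q : Fin K → ℝ} (hq : q ∈ simplex K)
    (i : Fin K) : ∃ j ≠ i, ((K : ℝ) - 1) * q j ≤ 1 - q i := by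
  have hcard : (Finset.univ.erase i).card = K - 1 := by simp
  obtain ⟨j, hj, hmin⟩ := Finset.exists_min_image (Finset.univ.erase i) q
    (by rw [← Finset.card_pos, hcard]; omega)
  refine ⟨j, Finset.ne_of_mem_erase hj, ?_⟩
  have hsum := Finset.card_nsmul_le_sum _ _ _ hmin
  rw [hcard, nsmul_eq_mul, Finset.sum_erase_eq_sub (Finset.mem_univ i), hq.2,
    Nat.cast_sub (by omega), Nat.cast_one] at hsum
  exact hsum

lemma prod_ofReal_le_iidMeasure {n K : ℕ} (p : Fin K → ℝ) {S : Set (Fin n → Fin K)}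
    {x : Fin n → Fin K} (hx : x ∈ S) :
    ∏ t, ENNReal.ofReal (p (x t)) ≤ iidMeasure n K p S := by
  rw [iidMeasure, Measure.coe_finsetSum, Finset.sum_apply]
  refine le_trans (le_of_eq ?_) (Finset.single_le_sum (fun y _ => zero_le) (Finset.mem_univ x))
  rw [Measure.smul_apply, Measure.dirac_apply_of_mem hx, smul_eq_mul, mul_one]

lemma le_worstRate_of_lt_prod {n K : ℕ} {phat : (Fin n → Fin K) → (Fin K → ℝ)} {δ : ℝ}
    {R : ℝ≥0∞} {p : Fin K → ℝ} (hp : p ∈ simplex K) {x : Fin n → Fin K}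
    (hR : R ≤ klD p (phat x)) (hδ : ENNReal.ofReal δ < ∏ t, ENNReal.ofReal (p (x t))) :
    R ≤ worstRate n K phat δ := by
  refine le_iInf₂ fun r hr => le_of_not_gt fun hrR => hδ.not_ge ?_
  calc ∏ t, ENNReal.ofReal (p (x t))
      ≤ iidMeasure n K p {y | r < klD p (phat y)} :=
        prod_ofReal_le_iidMeasure p (show r < klD p (phat x) from hrR.trans_le hR)
    _ ≤ _ := le_iSup (fun p' : {p : Fin K → ℝ // p ∈ simplex K} =>
          iidMeasure n K p'.val {y | r < klD p'.val (phat y)}) ⟨p, hp⟩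
    _ ≤ ENNReal.ofReal δ := hr

/-- minimax lower bound of order log(K-1)·log(1/δ)/n. -/
theorem logK_lower_bound (K : ℕ) (hK : 2 ≤ K) (δ : ℝ) (hδ : δ ∈ Set.Ioc (0 : ℝ) 1)
    (n : ℕ) (hn : (4/3 : ℝ) * Real.log (1/δ) < (n : ℝ)) :
    ENNReal.ofReal (2 * Real.log ((K : ℝ) - 1) * Real.log (1/δ) / (3 * n)) ≤
      minimaxRate n K δ := by
  set L := log (1 / δ) with hLdef
  have hK1 : (1 : ℝ) ≤ K - 1 := by
    have : (2 : ℝ) ≤ K := by exact_mod_cast hK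
    linarith
  rcases le_or_gt L 0 with hL | hL
  · rw [ENNReal.ofReal_of_nonpos (div_nonpos_of_nonpos_of_nonneg
      (mul_nonpos_of_nonneg_of_nonpos (by linarith [log_nonneg hK1]) hL) (by positivity))]
    exact zero_le
  have hn0 : (0 : ℝ) < n := by linarith
  set l := 2 * L / (3 * n)
  have hl0 : 0 < l := by positivity
  have hl1 : l < 1 := by rw [div_lt_one (by positivity)]; linarith
  have hδL : δ = exp (-L) := by rw [hLdef, one_div, log_inv, neg_neg, exp_log hδ.1]
  refine le_iInf fun ⟨phat, hphat⟩ => ?_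
  have i : Fin K := ⟨0, by omega⟩
  obtain ⟨j, hji, hj⟩ := exists_ne_mul_le_one_sub hK (hphat fun _ => i) i
  refine le_worstRate_of_lt_prod (twoPoint_mem_simplex hji.symm hl0.le hl1.le)
    (x := fun _ => i) ?_ ?_
  · rw [show 2 * log ((K : ℝ) - 1) * L / (3 * n) = l * log ((K : ℝ) - 1) by ring]
    exact ofReal_mul_log_le_klD_twoPoint hji.symm hl0 hl1 hK1 hj
  · simp only [twoPoint, if_true, Finset.prod_const, Finset.card_univ, Fintype.card_fin]
    rw [← ENNReal.ofReal_pow (by linarith), ENNReal.ofReal_lt_ofReal_iff (by positivity), hδL]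
    exact exp_neg_lt_one_sub_pow hL hn
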